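/- Let λ, t ∈ ℂ with λ ≠ 0, let ζ ∈ ℂ with ζ³ = 1 and ζ ≠ 1, and let a ∈ ℂ with a³ = −λ. If (x, y, z) ∈ ℂ³ satisfies the three linear equations 3a²ζ^{2k}·x + 3λ·y + λt(a²ζ^{2k} − 1)·z = 0 for k = 0, 1, 2, then there exists c ∈ ℂ with (x, y, z) = c·(−λt, t, 3). (Hence the three tangent lines T₁, T₂, T₃ of E_{λ,t} at its intersection points with G meet in the single point P_{λ,t} = (−λt : t : 3).) -/
import Mathlib


/-- The three tangent lines `Tₖ = {3a²ζ^{2k}x + 3λy + λt(a²ζ^{2k}−1)z = 0}`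
(`k = 0, 1, 2`) of `E_{λ,t}` at its intersection points with `G` meet in the
single point `P_{λ,t} = (−λt : t : 3)`. -/
theorem stmt_17 (l t ζ a : ℂ) (hl : l ≠ 0) (hζ3 : ζ ^ 3 = 1) (hζ1 : ζ ≠ 1)
    (ha : a ^ 3 = -l) (x y z : ℂ)
    (h₀ : 3 * a ^ 2 * x + 3 * l * y + l * t * (a ^ 2 - 1) * z = 0)
    (h₁ : 3 * a ^ 2 * ζ ^ 2 * x + 3 * l * y + l * t * (a ^ 2 * ζ ^ 2 - 1) * z = 0)
    (h₂ : 3 * a ^ 2 * ζ ^ 4 * x + 3 * l * y + l * t * (a ^ 2 * ζ ^ 4 - 1) * z = 0) :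
    ∃ c : ℂ, x = c * (-(l * t)) ∧ y = c * t ∧ z = c * 3 := by
  have ha0 : a ≠ 0 := by
    intro h
    apply hl
    have := ha
    rw [h] at this
    simpa using this.symm
  have hζ2 : ζ ^ 2 - 1 ≠ 0 := by
    intro h
    apply hζ1
    have h2 : ζ ^ 2 = 1 := sub_eq_zero.mp h
    calc ζ = ζ * ζ ^ 2 := by rw [h2, mul_one]
      _ = ζ ^ 3 := by ring
      _ = 1 := hζ3
  have key : 3 * x + l * t * z = 0 := by
    have h3 : a ^ 2 * (ζ ^ 2 - 1) * (3 * x + l * t * z) = 0 := by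
      linear_combination h₁ - h₀
    rcases mul_eq_zero.mp h3 with h | h
    · rcases mul_eq_zero.mp h with h | h
      · exact absurd h (pow_ne_zero 2 ha0)
      · exact absurd h hζ2
    · exact h
  have hy : 3 * l * y = l * t * z := by linear_combination h₀ - a ^ 2 * key
  refine ⟨z / 3, ?_, ?_, ?_⟩
  · field_simp
    linear_combination key
  · have h3 : (3 : ℂ) * y = t * z := by
      apply mul_left_cancel₀ hl
      linear_combination hy
    field_simp
    linear_combination h3
  · ring
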